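/- Let (ΛV, d) be a Sullivan minimal model of finite rational category (e.g. of finite LS category), and let x ∈ V be a generator of even degree 2n. Then there exist k ≥ 2 and η ∈ ΛV such that d(η) = x^k + R, where R lies in the ideal of ΛV generated by generators of degree ≤ 2n − 1. -/

import Mathlib

open scoped DirectSum

/-- A graded-commutative differential graded algebra over `ℚ`, graded by `ℕ`. -/
structure CDGA where
  R : Type
  [ring : Ring R]
  [alg : Algebra ℚ R]
  gr : ℕ → Submodule ℚ R
  [graded : GradedAlgebra gr]
  d : R →ₗ[ℚ] R
  d_d : ∀ x, d (d x) = 0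
  d_gr : ∀ n, ∀ x ∈ gr n, d x ∈ gr (n + 1)
  leibniz : ∀ (m : ℕ) (x y : R), x ∈ gr m →
    d (x * y) = d x * y + ((-1 : ℚ) ^ m) • (x * d y)
  gcomm : ∀ (m n : ℕ) (x y : R), x ∈ gr m → y ∈ gr n →
    x * y = ((-1 : ℚ) ^ (m * n)) • (y * x)

attribute [instance] CDGA.ring CDGA.alg CDGA.graded

/-- A morphism of differential graded algebras. -/
structure CDGAHom (A B : CDGA) where
  toHom : A.R →ₐ[ℚ] B.R
  map_gr : ∀ n, ∀ x ∈ A.gr n, toHom x ∈ B.gr n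
  map_d : ∀ x, toHom (A.d x) = B.d (toHom x)

/-- Composition of DGA morphisms. -/
def CDGAHom.comp {A B C : CDGA} (g : CDGAHom B C) (f : CDGAHom A B) : CDGAHom A C :=
  ⟨g.toHom.comp f.toHom,
    fun n x hx => g.map_gr n _ (f.map_gr n x hx),
    fun x => by simp [AlgHom.comp_apply, f.map_d, g.map_d]⟩

/-- The sign involution `x ↦ Σ (-1)^n x_n` of a graded algebra. -/
noncomputable def CDGA.sgn (A : CDGA) : A.R → A.R := fun x =>
  DFinsupp.sumAddHom
    (fun n => (((-1 : ℚ) ^ n • (A.gr n).subtype : ↥(A.gr n) →ₗ[ℚ] A.R)).toAddMonoidHom)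
    (DirectSum.decompose A.gr x)

/-- Coefficient-wise application of a map to a polynomial. -/
noncomputable def mapCoeff {R : Type} [Ring R] (g : R → R) (p : Polynomial R) :
    Polynomial R :=
  p.sum fun n a => Polynomial.C (g a) * Polynomial.X ^ n

/-- Multiplication in the path object `B ⊗ Λ(t, dt)`: a pair `(f, g)` represents
`f(t) + g(t)dt`. -/
noncomputable def pathMul (B : CDGA) (u v : Polynomial B.R × Polynomial B.R) :
    Polynomial B.R × Polynomial B.R :=
  (u.1 * v.1, u.1 * v.2 + u.2 * mapCoeff B.sgn v.1)

/-- The differential of the path object `B ⊗ Λ(t, dt)`. -/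
noncomputable def pathD (B : CDGA) (u : Polynomial B.R × Polynomial B.R) :
    Polynomial B.R × Polynomial B.R :=
  (mapCoeff (B.d ·) u.1, (mapCoeff B.sgn u.1).derivative + mapCoeff (B.d ·) u.2)

/-- Two DGA morphisms are DG homotopic if there is a DGA map `A → B ⊗ Λ(t, dt)`
restricting to them at `t = 0` and `t = 1`. -/
noncomputable def DGHomotopic {A B : CDGA} (φ ψ : CDGAHom A B) : Prop :=
  ∃ H : A.R → Polynomial B.R × Polynomial B.R,
    (∀ x y, H (x + y) = H x + H y) ∧
    (∀ (q : ℚ) x, H (q • x) = q • H x) ∧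
    H 1 = (1, 0) ∧
    (∀ x y, H (x * y) = pathMul B (H x) (H y)) ∧
    (∀ n, ∀ x ∈ A.gr n,
      (∀ i, (H x).1.coeff i ∈ B.gr n) ∧ (∀ i, (H x).2.coeff i ∈ B.gr (n - 1))) ∧
    (∀ x, H (A.d x) = pathD B (H x)) ∧
    (∀ x, Polynomial.eval 0 (H x).1 = φ.toHom x) ∧
    (∀ x, Polynomial.eval 1 (H x).1 = ψ.toHom x)

/-- The subspace of decomposable elements: the span of products of two elements of
positive degree. -/
def CDGA.decomposables (A : CDGA) : Submodule ℚ A.R :=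
  Submodule.span ℚ {z | ∃ (p q : ℕ) (x y : A.R),
    x ∈ A.gr (p + 1) ∧ y ∈ A.gr (q + 1) ∧ z = x * y}

/-- A (simply connected) minimal Sullivan algebra: a graded-commutative DGA which is
generated by a graded subspace `V` of generators vanishing in degrees `0, 1`, with
decomposable differential. -/
structure Sullivan extends CDGA where
  V : ℕ → Submodule ℚ R
  V_le : ∀ n, V n ≤ gr n
  V0 : V 0 = ⊥
  V1 : V 1 = ⊥
  generates : Algebra.adjoin ℚ (⋃ n, (V n : Set R)) = ⊤
  minimal : ∀ n, ∀ v ∈ V n, d v ∈ toCDGA.decomposables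

/-- The ideal of a Sullivan algebra generated by the generators of degree `< N`. -/
def Sullivan.lowIdeal (S : Sullivan) (N : ℕ) : Submodule ℚ S.R :=
  Submodule.span ℚ {z | ∃ m, m < N ∧ ∃ g ∈ S.V m, ∃ r : S.R, z = g * r}

/-- Finite rational category of a minimal Sullivan algebra, in the sense of
Félix–Halperin, encoded through the consequences used here: for every `N` the
quotient of `ΛV` by the DG ideal generated by the generators of degree `< N` has
finite rational cup length, i.e. there is an `L` such that any product of `L`
positive-degree elements which are cycles modulo the ideal is a boundary modulo
the ideal. -/
def Sullivan.FiniteRatCat (S : Sullivan) : Prop :=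
  ∀ N : ℕ, ∃ L : ℕ, 0 < L ∧ ∀ a : Fin L → S.R,
    (∀ i, ∃ m, a i ∈ S.gr (m + 1)) → (∀ i, S.d (a i) ∈ S.lowIdeal N) →
    ∃ b : S.R, (List.ofFn a).prod - S.d b ∈ S.lowIdeal N

/-! The differential of an even generator `x` of degree `2n` is decomposable, hence lies in the
ideal `I` generated by the generators of degree `< 2n`; so `x²` is a positive-degree cycle modulo
`I`. Finite rational category bounds the cup length of `ΛV / I`, so some power `(x²)^L` is a
boundary modulo `I`. -/

theorem GradedAlgebra.mem_of_mem_span_of_homogeneous {ι R A : Type*} [DecidableEq ι]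
    [AddMonoid ι] [CommSemiring R] [Semiring A] [Algebra R A] (𝒜 : ι → Submodule R A)
    [GradedAlgebra 𝒜] {s : Set A} {P : Submodule R A} {z : A} {D : ι}
    (hz : z ∈ Submodule.span R s) (hzD : z ∈ 𝒜 D)
    (hs : ∀ w ∈ s, ∃ i, w ∈ 𝒜 i ∧ (i = D → w ∈ P)) : z ∈ P := by
  have hspan : Submodule.span R s ≤ P.comap (GradedAlgebra.proj 𝒜 D) := by
    refine Submodule.span_le.2 fun w hw => ?_
    obtain ⟨i, hwi, hiP⟩ := hs w hw
    by_cases hi : i = D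
    · subst hi
      simpa [GradedAlgebra.proj_apply, DirectSum.decompose_of_mem_same 𝒜 hwi] using hiP rfl
    · simp [GradedAlgebra.proj_apply, DirectSum.decompose_of_mem_ne 𝒜 hwi hi]
  simpa [GradedAlgebra.proj_apply, DirectSum.decompose_of_mem_same 𝒜 hzD] using hspan hz

namespace Sullivan

variable (S : Sullivan)

def monomials : Submonoid S.R := Submonoid.closure (⋃ n, (S.V n : Set S.R))

lemma span_monomials_eq_top : Submodule.span ℚ (S.monomials : Set S.R) = ⊤ := by
  rw [monomials, ← Algebra.adjoin_eq_span, S.generates, Algebra.top_toSubmodule]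

variable {S}

lemma lowIdeal_mul_right {N : ℕ} {z : S.R} (hz : z ∈ S.lowIdeal N) (c : S.R) :
    z * c ∈ S.lowIdeal N := by
  have h : S.lowIdeal N ≤ (S.lowIdeal N).comap (LinearMap.mulRight ℚ c) := by
    rw [lowIdeal, Submodule.span_le]
    rintro w ⟨m, hm, g, hg, r, rfl⟩
    exact Submodule.subset_span ⟨m, hm, g, hg, r * c, by simp [mul_assoc]⟩
  exact h hz

lemma gr_le_lowIdeal {N m : ℕ} (h0 : 0 < m) (hN : m < N) : S.gr m ≤ S.lowIdeal N := by
  intro y hy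
  refine GradedAlgebra.mem_of_mem_span_of_homogeneous S.gr
    (S.span_monomials_eq_top ▸ Submodule.mem_top) hy fun w hw => ?_
  induction hw using Submonoid.closure_induction_left with
  | one => exact ⟨0, SetLike.one_mem_graded _, by omega⟩
  | mul_left g hg r _ ih =>
    obtain ⟨k, hgk⟩ := Set.mem_iUnion.1 hg
    obtain ⟨j, hrj, -⟩ := ih
    refine ⟨k + j, SetLike.mul_mem_graded (S.V_le k hgk) hrj, fun hkj => ?_⟩
    exact Submodule.subset_span ⟨k, by omega, g, hgk, r, rfl⟩

/-- One of the two factors of a decomposable product of degree `< 2N` has degree `< N`. -/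
lemma mem_lowIdeal_of_mem_decomposables {N D : ℕ} {z : S.R}
    (hz : z ∈ S.decomposables) (hzD : z ∈ S.gr D) (hD : D < 2 * N) : z ∈ S.lowIdeal N := by
  refine GradedAlgebra.mem_of_mem_span_of_homogeneous S.gr hz hzD ?_
  rintro _ ⟨p, q, a, b, ha, hb, rfl⟩
  refine ⟨p + 1 + (q + 1), SetLike.mul_mem_graded ha hb, fun hpq => ?_⟩
  rcases le_or_gt (p + 1) (q + 1) with hle | hlt
  · exact lowIdeal_mul_right (gr_le_lowIdeal (Nat.succ_pos p) (by omega) ha) b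
  · rw [S.gcomm _ _ a b ha hb]
    exact Submodule.smul_mem _ _
      (lowIdeal_mul_right (gr_le_lowIdeal (Nat.succ_pos q) (by omega) hb) a)

lemma d_mem_lowIdeal {m : ℕ} {v : S.R} (hv : v ∈ S.V m) : S.d v ∈ S.lowIdeal m := by
  rcases le_or_gt m 1 with hm | hm
  · interval_cases m <;> simp_all [S.V0, S.V1]
  · exact mem_lowIdeal_of_mem_decomposables (S.minimal m v hv) (S.d_gr m v (S.V_le m hv))
      (by omega)

lemma d_sq_of_even {m : ℕ} {x : S.R} (hx : x ∈ S.gr m) (hm : Even m) :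
    S.d (x ^ 2) = (2 : ℚ) • (S.d x * x) := by
  have hcomm : x * S.d x = S.d x * x := by
    simpa [(Nat.even_mul_succ_self m).neg_one_pow] using
      S.gcomm m (m + 1) x (S.d x) hx (S.d_gr m x hx)
  rw [sq, S.leibniz m x x hx, hm.neg_one_pow, one_smul, hcomm, two_smul]

lemma FiniteRatCat.exists_pow_sub_d_mem_lowIdeal (hcat : S.FiniteRatCat) (N : ℕ) {m : ℕ}
    {a : S.R} (ha : a ∈ S.gr (m + 1)) (hda : S.d a ∈ S.lowIdeal N) :
    ∃ L, 0 < L ∧ ∃ b, a ^ L - S.d b ∈ S.lowIdeal N := by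
  obtain ⟨L, hL, hcup⟩ := hcat N
  obtain ⟨b, hb⟩ := hcup (fun _ => a) (fun _ => ⟨m, ha⟩) (fun _ => hda)
  rw [List.ofFn_const, List.prod_replicate] at hb
  exact ⟨L, hL, b, hb⟩

end Sullivan

/-- Let `(ΛV, d)` be a Sullivan minimal model of finite rational category, and let
`x ∈ V` be a generator of even degree `2n`.  Then there are `k ≥ 2` and `η ∈ ΛV`
with `d η = x^k + R`, where `R` lies in the ideal generated by the generators of
degree `≤ 2n - 1`. -/
theorem power_of_even_generator_is_boundary (S : Sullivan) (hcat : S.FiniteRatCat)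
    (n : ℕ) (x : S.R) (hx : x ∈ S.V (2 * (n + 1))) :
    ∃ k : ℕ, 2 ≤ k ∧ ∃ η RR : S.R, RR ∈ S.lowIdeal (2 * (n + 1)) ∧
      S.d η = x ^ k + RR := by
  have hgr : x ∈ S.gr (2 * (n + 1)) := S.V_le _ hx
  have hx2 : x ^ 2 ∈ S.gr (4 * n + 3 + 1) := by
    rw [sq, show 4 * n + 3 + 1 = 2 * (n + 1) + 2 * (n + 1) by ring]
    exact SetLike.mul_mem_graded hgr hgr
  have hdx2 : S.d (x ^ 2) ∈ S.lowIdeal (2 * (n + 1)) := by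
    rw [Sullivan.d_sq_of_even hgr (even_two_mul _)]
    exact Submodule.smul_mem _ _ (Sullivan.lowIdeal_mul_right (Sullivan.d_mem_lowIdeal hx) x)
  obtain ⟨L, hL, b, hb⟩ := hcat.exists_pow_sub_d_mem_lowIdeal _ hx2 hdx2
  refine ⟨2 * L, by omega, b, S.d b - x ^ (2 * L), ?_, by abel⟩
  rw [← neg_sub, pow_mul]
  exact Submodule.neg_mem _ hb
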